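/- Let $V$ be a finite-dimensional real normed vector space and $\varepsilon > 0$. There exists $r_\varepsilon > 0$ such that for every hyperplane $V' \subseteq V$ and every pair of vectors $v_1, v_2 \in V$ of norm 1 with $\delta(\mathbb{R} v_i, \mathbb{P}(V')) \geq \varepsilon$ for $i = 1, 2$, the unique scalar $\alpha \in \mathbb{R}$ with $v_1 - \alpha v_2 \in V'$ satisfies $r_\varepsilon^{-1} \leq |\alpha| \leq r_\varepsilon$. -/

import Mathlib

/-! A unit vector `v` with `δ(ℝv, ℙ(V')) ≥ ε` lies at distance at least `ε / 2` from the subspace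
`V'` itself, because normalizing a point of `V'` at most doubles its distance to `v`. Since
`α v₂ = v₁ - (v₁ - α v₂)` and `α⁻¹ v₁ = v₂ + α⁻¹ (v₁ - α v₂)`, both `|α|` and `|α|⁻¹` are then at
least `ε / 2`, so `r_ε = 2 / ε` works. -/

open Filter Topology

variable {V : Type*} [NormedAddCommGroup V] [NormedSpace ℝ V]

/-- The distance between two lines (points of `ℙ(V)`), viewed as submodules:
`d(x₁, x₂) = inf {‖v₁ - v₂‖ : vᵢ ∈ xᵢ, ‖vᵢ‖ = 1}`. -/
noncomputable def projDist (x₁ x₂ : Submodule ℝ V) : ℝ :=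
  sInf {r : ℝ | ∃ v₁ ∈ x₁, ∃ v₂ ∈ x₂, ‖v₁‖ = 1 ∧ ‖v₂‖ = 1 ∧ r = ‖v₁ - v₂‖}

/-- The distance `δ(x, ℙ(W))` from a line `x` to the projectivization of a subspace `W`. -/
noncomputable def projDelta (x W : Submodule ℝ V) : ℝ :=
  sInf {r : ℝ | ∃ y : Submodule ℝ V, y ≤ W ∧ Module.finrank ℝ y = 1 ∧ r = projDist x y}

/-- The spectral radius of an endomorphism, via Gelfand's formula; in finite dimension
this is the maximal modulus `λ₁(g)` of the complex eigenvalues of `g`. -/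
noncomputable def specRad (g : V →L[ℝ] V) : ℝ :=
  Filter.limsup (fun n : ℕ => ‖g ^ n‖ ^ ((1 : ℝ) / n)) Filter.atTop

/-- `g` is proximal with top (real) eigenvalue `α`, attracting eigenvector `v`, and
invariant complementary hyperplane `W` on which the spectral radius is `< |α|`; this says
exactly that `α` is the unique eigenvalue of maximal modulus and has multiplicity one. -/
def IsProximalWith (g : V →L[ℝ] V) (α : ℝ) (v : V) (W : Submodule ℝ V) : Prop :=
  v ≠ 0 ∧ g v = α • v ∧ IsCompl (Submodule.span ℝ {v}) W ∧
  ∃ gW : W →L[ℝ] W, (∀ w : W, g (w : V) = (gW w : V)) ∧ specRad gW < |α|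

/-- `g` is `ε`-proximal with data `(α, v, W)`: it is proximal, `δ(x_g⁺, X_g^<) ≥ 2ε`,
`g` maps `B_g^ε` into `b_g^ε`, and `g` is `ε`-Lipschitz on `B_g^ε` (in `ℙ(V)`). -/
def IsEpsProximalWith (g : V →L[ℝ] V) (ε α : ℝ) (v : V) (W : Submodule ℝ V) : Prop :=
  IsProximalWith g α v W ∧ 2 * ε ≤ projDelta (Submodule.span ℝ {v}) W ∧
  (∀ x : Submodule ℝ V, Module.finrank ℝ x = 1 → ε ≤ projDelta x W →
    Submodule.map (g : V →ₗ[ℝ] V) x ≠ ⊥ ∧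
      projDist (Submodule.map (g : V →ₗ[ℝ] V) x) (Submodule.span ℝ {v}) ≤ ε) ∧
  (∀ x y : Submodule ℝ V, Module.finrank ℝ x = 1 → Module.finrank ℝ y = 1 →
    ε ≤ projDelta x W → ε ≤ projDelta y W →
    projDist (Submodule.map (g : V →ₗ[ℝ] V) x) (Submodule.map (g : V →ₗ[ℝ] V) y) ≤
      ε * projDist x y)

/-- `g` is `ε`-proximal. -/
def IsEpsProximal (g : V →L[ℝ] V) (ε : ℝ) : Prop :=
  ∃ α v W, IsEpsProximalWith g ε α v W

open NormedSpace (normalize norm_normalize norm_smul_normalize)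

lemma norm_sub_normalize_le_two_mul_norm_sub {v : V} (hv : ‖v‖ = 1) (u : V) :
    ‖v - normalize u‖ ≤ 2 * ‖v - u‖ := by
  have hu : u - normalize u = (‖u‖ - 1) • normalize u := by
    rw [sub_smul, norm_smul_normalize, one_smul]
  have hnorm : ‖u - normalize u‖ ≤ ‖v - u‖ := by
    calc ‖u - normalize u‖ ≤ |‖u‖ - ‖v‖| := by
          rw [hu, norm_smul, Real.norm_eq_abs, hv]
          rcases eq_or_ne u 0 with rfl | hu0
          · simp
          · rw [norm_normalize hu0, mul_one]
      _ ≤ ‖v - u‖ := by rw [abs_sub_comm]; exact abs_norm_sub_norm_le v u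
  calc ‖v - normalize u‖ ≤ ‖v - u‖ + ‖u - normalize u‖ := norm_sub_le_norm_sub_add_norm_sub _ _ _
    _ ≤ 2 * ‖v - u‖ := by linarith

lemma projDist_le_norm_sub {x y : Submodule ℝ V} {v w : V} (hv : v ∈ x) (hw : w ∈ y)
    (hv1 : ‖v‖ = 1) (hw1 : ‖w‖ = 1) : projDist x y ≤ ‖v - w‖ :=
  csInf_le ⟨0, by rintro r ⟨a, -, b, -, -, -, rfl⟩; positivity⟩ ⟨v, hv, w, hw, hv1, hw1, rfl⟩

lemma projDist_nonneg (x y : Submodule ℝ V) : 0 ≤ projDist x y :=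
  Real.sInf_nonneg (by rintro r ⟨a, -, b, -, -, -, rfl⟩; positivity)

lemma projDelta_le_projDist_span {x W : Submodule ℝ V} {w : V} (hw : w ∈ W) (hw0 : w ≠ 0) :
    projDelta x W ≤ projDist x (Submodule.span ℝ {w}) :=
  csInf_le ⟨0, by rintro r ⟨y, -, -, rfl⟩; exact projDist_nonneg _ _⟩
    ⟨_, (Submodule.span_singleton_le_iff_mem w W).2 hw, finrank_span_singleton hw0, rfl⟩

lemma projDelta_bot (x : Submodule ℝ V) : projDelta x ⊥ = 0 := by
  rw [projDelta, ← Real.sInf_empty]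
  congr 1
  refine Set.eq_empty_of_forall_notMem ?_
  rintro r ⟨y, hy, hrank, -⟩
  rw [le_bot_iff.1 hy, finrank_bot] at hrank
  exact zero_ne_one hrank

section LineFarFromSubspace

variable {ε : ℝ} {v : V} {W : Submodule ℝ V} (hv : ‖v‖ = 1)
  (h : ε ≤ projDelta (Submodule.span ℝ {v}) W)
include hv h

lemma le_norm_sub_of_le_projDelta {w : V} (hw : w ∈ W) (hw1 : ‖w‖ = 1) : ε ≤ ‖v - w‖ := by
  have hw0 : w ≠ 0 := norm_ne_zero_iff.1 (by rw [hw1]; exact one_ne_zero)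
  calc ε ≤ projDist (Submodule.span ℝ {v}) (Submodule.span ℝ {w}) :=
        h.trans (projDelta_le_projDist_span hw hw0)
    _ ≤ ‖v - w‖ := projDist_le_norm_sub (Submodule.mem_span_singleton_self v)
        (Submodule.mem_span_singleton_self w) hv hw1

lemma le_two_of_le_projDelta : ε ≤ 2 := by
  rcases eq_or_ne W ⊥ with rfl | hW
  · linarith [projDelta_bot (Submodule.span ℝ {v})]
  obtain ⟨w, hw, hw0⟩ := Submodule.exists_mem_ne_zero_of_ne_bot hW
  calc ε ≤ ‖v - normalize w‖ :=
        le_norm_sub_of_le_projDelta hv h (W.smul_mem _ hw) (norm_normalize hw0)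
    _ ≤ ‖v‖ + ‖normalize w‖ := norm_sub_le _ _
    _ = 2 := by rw [hv, norm_normalize hw0]; norm_num

lemma half_le_norm_sub_of_le_projDelta {u : V} (hu : u ∈ W) : ε / 2 ≤ ‖v - u‖ := by
  rcases eq_or_ne u 0 with rfl | hu0
  · rw [sub_zero, hv]
    linarith [le_two_of_le_projDelta hv h]
  · have hmem : normalize u ∈ W := W.smul_mem _ hu
    linarith [le_norm_sub_of_le_projDelta hv h hmem (norm_normalize hu0),
      norm_sub_normalize_le_two_mul_norm_sub hv u]

end LineFarFromSubspace

lemma le_abs_of_sub_smul_mem {W : Submodule ℝ V} {v₁ v₂ : V} {c α : ℝ} (hv₂ : ‖v₂‖ = 1)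
    (h : ∀ u ∈ W, c ≤ ‖v₁ - u‖) (hα : v₁ - α • v₂ ∈ W) : c ≤ |α| := by
  simpa [norm_smul, hv₂] using h _ hα

theorem stmt_16_general (ε : ℝ) (hε : 0 < ε) :
    ∃ r : ℝ, 0 < r ∧
      ∀ V' : Submodule ℝ V, Module.finrank ℝ V' + 1 = Module.finrank ℝ V →
      ∀ v₁ v₂ : V, ‖v₁‖ = 1 → ‖v₂‖ = 1 →
        ε ≤ projDelta (Submodule.span ℝ {v₁}) V' →
        ε ≤ projDelta (Submodule.span ℝ {v₂}) V' →
        ∀ α : ℝ, v₁ - α • v₂ ∈ V' → r⁻¹ ≤ |α| ∧ |α| ≤ r := by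
  refine ⟨2 / ε, by positivity, fun V' _ v₁ v₂ hv₁ hv₂ hδ₁ hδ₂ α hα => ?_⟩
  have hlow : ε / 2 ≤ |α| :=
    le_abs_of_sub_smul_mem hv₂ (fun _ => half_le_norm_sub_of_le_projDelta hv₁ hδ₁) hα
  have hα0 : α ≠ 0 := abs_pos.1 (by linarith)
  have hα' : v₂ - α⁻¹ • v₁ ∈ V' := by
    convert V'.smul_mem (-α⁻¹) hα using 1
    rw [smul_sub, smul_smul, neg_mul, inv_mul_cancel₀ hα0]; module
  have hupp : ε / 2 ≤ |α⁻¹| :=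
    le_abs_of_sub_smul_mem hv₁ (fun _ => half_le_norm_sub_of_le_projDelta hv₂ hδ₂) hα'
  rw [abs_inv, le_inv_comm₀ (by positivity) (abs_pos.2 hα0), inv_div] at hupp
  exact ⟨by rwa [inv_div], hupp⟩

/-- Lemma 6.1: for every `ε > 0` there is `r_ε > 0` such that, for every hyperplane `V'`
and unit vectors `v₁, v₂` with `δ(ℝvᵢ, ℙ(V')) ≥ ε`, the scalar `α` defined by
`v₁ - α v₂ ∈ V'` satisfies `r_ε⁻¹ ≤ |α| ≤ r_ε`. -/
theorem stmt_16 [FiniteDimensional ℝ V] (ε : ℝ) (hε : 0 < ε) :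
    ∃ r : ℝ, 0 < r ∧
      ∀ V' : Submodule ℝ V, Module.finrank ℝ V' + 1 = Module.finrank ℝ V →
      ∀ v₁ v₂ : V, ‖v₁‖ = 1 → ‖v₂‖ = 1 →
        ε ≤ projDelta (Submodule.span ℝ {v₁}) V' →
        ε ≤ projDelta (Submodule.span ℝ {v₂}) V' →
        ∀ α : ℝ, v₁ - α • v₂ ∈ V' → r⁻¹ ≤ |α| ∧ |α| ≤ r :=
  stmt_16_general ε hε
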